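/- Let h^f_s(Ω) = inf{ Per_s(A)/∫_A f : A ⊂ Ω, ∫_A f > 0 } be the weighted fractional Cheegar constant, with f ≥ 0, f ∈ L^{n/σ}(Ω) for some σ ∈ (0,s), and suppose f > 0 on some ball B ⊂ Ω (i.e. ∫_B f > 0). If h^f_s(Ω) > 1, then the unique minimizer of F(u) = (1/2)[u]_{W^{s,1}(ℝⁿ)} − ∫_Ω fu over W^{s,1}_0(Ω) is u = 0. -/

import Mathlib

open MeasureTheory Set
open scoped ENNReal

noncomputable section

/-- The Gagliardo `W^{s,1}(ℝⁿ)` seminorm of `u`, as a double integral in `ℝ≥0∞`. -/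
def gag1 (n : ℕ) (s : ℝ) (u : EuclideanSpace ℝ (Fin n) → ℝ) : ℝ≥0∞ :=
  ∫⁻ x, ∫⁻ y, ENNReal.ofReal (|u x - u y| / dist x y ^ ((n : ℝ) + s))

/-- Admissible class `W^{s,1}_0(Ω)`: measurable functions vanishing outside `Ω` with finite
Gagliardo `W^{s,1}(ℝⁿ)` seminorm (and with `f·u` integrable on `Ω`, so that the energy is
well defined). -/
def Adm (n : ℕ) (s : ℝ) (Ω : Set (EuclideanSpace ℝ (Fin n)))
    (f u : EuclideanSpace ℝ (Fin n) → ℝ) : Prop :=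
  Measurable u ∧ (∀ x ∉ Ω, u x = 0) ∧ gag1 n s u ≠ ⊤ ∧
    IntegrableOn (fun x => f x * u x) Ω

/-- The energy `F(u) = (1/2)[u]_{W^{s,1}(ℝⁿ)} − ∫_Ω f u`. -/
def F1 (n : ℕ) (s : ℝ) (Ω : Set (EuclideanSpace ℝ (Fin n)))
    (f u : EuclideanSpace ℝ (Fin n) → ℝ) : ℝ :=
  (1 / 2) * (gag1 n s u).toReal - ∫ x in Ω, f x * u x

/-- The fractional `s`-perimeter of a set `A ⊆ ℝⁿ`. -/
def perS (n : ℕ) (s : ℝ) (A : Set (EuclideanSpace ℝ (Fin n))) : ℝ≥0∞ :=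
  (1 / 2) * gag1 n s (A.indicator fun _ => (1 : ℝ))

/-- The geometric functional `P(A) = Per_s(A) − ∫_A f`, valued in `EReal`. -/
def PE (n : ℕ) (s : ℝ) (f : EuclideanSpace ℝ (Fin n) → ℝ)
    (A : Set (EuclideanSpace ℝ (Fin n))) : EReal :=
  (perS n s A : EReal) - ((∫ x in A, f x : ℝ) : EReal)

/-- The weighted fractional `(s,f)`-Cheegar constant of `Ω`. -/
def cheeg (n : ℕ) (s : ℝ) (Ω : Set (EuclideanSpace ℝ (Fin n)))
    (f : EuclideanSpace ℝ (Fin n) → ℝ) : ℝ≥0∞ :=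
  sInf {r : ℝ≥0∞ | ∃ A : Set (EuclideanSpace ℝ (Fin n)), A ⊆ Ω ∧ MeasurableSet A ∧
    (0 < ∫ x in A, f x) ∧ r = perS n s A / ENNReal.ofReal (∫ x in A, f x)}

/-!
For `u ≥ 0` the Gagliardo seminorm satisfies the coarea formula
`[u] = ∫₀^∞ [𝟙_{u > t}] dt`, and the layer-cake formula gives `∫_Ω f u = ∫₀^∞ ∫_{u > t} f dt`.
Since every superlevel set of an admissible `u` lies in `Ω`, the definition of the Cheeger
constant gives `h ∫_{u > t} f ≤ Per_s({u > t})` for each level; integrating in `t` (applied to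
`u⁺`) yields `h ∫_Ω f u⁺ ≤ ½[u]`. Hence `F(u) ≥ (h - 1) ∫_Ω f u⁺ ≥ 0 = F(0)`, and when `h > 1`
the inequality is strict unless `[u] = 0`. A function with `[u] = 0` is a.e. constant, and the
constant is `0` because `u` vanishes outside the bounded set `Ω`, whose complement has infinite
measure.
-/

lemma ofReal_abs_sub_eq_lintegral {a b : ℝ} (ha : 0 ≤ a) (hb : 0 ≤ b) :
    ENNReal.ofReal |a - b| = ∫⁻ t in Ioi 0,
      ENNReal.ofReal |(if t < a then (1 : ℝ) else 0) - if t < b then 1 else 0| := by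
  have hind : (fun t => ENNReal.ofReal |(if t < a then (1 : ℝ) else 0) - if t < b then 1 else 0|)
      = (Ico (min a b) (max a b)).indicator 1 := by
    ext t
    simp only [indicator, mem_Ico, min_le_iff, lt_max_iff, Pi.one_apply]
    split_ifs <;> norm_num <;> grind
  rw [hind, Measure.restrict_congr_set Ioi_ae_eq_Ici, lintegral_indicator_one measurableSet_Ico,
    Measure.restrict_apply measurableSet_Ico,
    inter_eq_left.2 (Ico_subset_Ici_self.trans (Ici_subset_Ici.2 (le_min ha hb))),
    Real.volume_Ico, max_sub_min_eq_abs']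

lemma setOf_lt_subset_of_eq_zero {α : Type*} {Ω : Set α} {w : α → ℝ} {t : ℝ} (ht : 0 ≤ t)
    (hw : ∀ x ∉ Ω, w x = 0) : {x | t < w x} ⊆ Ω := fun x hx => by
  by_contra hxΩ
  exact (hx.trans_eq (hw x hxΩ)).not_ge ht

section Gagliardo

variable {n : ℕ} {s : ℝ}

local notation "E" => EuclideanSpace ℝ (Fin n)

lemma gag1_eq_lintegral_prod {u : E → ℝ} (hu : Measurable u) :
    gag1 n s u = ∫⁻ p : E × E,
      ENNReal.ofReal |u p.1 - u p.2| * ENNReal.ofReal (dist p.1 p.2 ^ ((n : ℝ) + s))⁻¹ := by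
  rw [Measure.volume_eq_prod, lintegral_prod _ (by fun_prop)]
  simp_rw [gag1, div_eq_mul_inv, ENNReal.ofReal_mul (abs_nonneg _)]

lemma gag1_mono {u v : E → ℝ} (h : ∀ x y, |u x - u y| ≤ |v x - v y|) :
    gag1 n s u ≤ gag1 n s v := by
  refine lintegral_mono fun x => lintegral_mono fun y => ENNReal.ofReal_le_ofReal ?_
  exact div_le_div_of_nonneg_right (h x y) (by positivity)

theorem gag1_eq_lintegral_gag1_superlevel {u : E → ℝ} (hu : Measurable u) (hu0 : ∀ x, 0 ≤ u x) :
    gag1 n s u = ∫⁻ t in Ioi 0, gag1 n s ({x | t < u x}.indicator fun _ => (1 : ℝ)) := by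
  have hlevel : ∀ t : ℝ, Measurable ({x | t < u x}.indicator fun _ => (1 : ℝ)) := fun t =>
    measurable_const.indicator (measurableSet_lt measurable_const hu)
  simp_rw [gag1_eq_lintegral_prod (hlevel _), gag1_eq_lintegral_prod hu,
    ofReal_abs_sub_eq_lintegral (hu0 _) (hu0 _), indicator_apply, mem_ofPred_eq]
  refine (lintegral_congr fun p => (lintegral_mul_const' _ _ ENNReal.ofReal_ne_top).symm).trans
    (lintegral_lintegral_swap ?_)
  have hstep : ∀ {g : E × E → ℝ}, Measurable g →
      Measurable fun q : (E × E) × ℝ => if q.2 < g q.1 then (1 : ℝ) else 0 := fun hg =>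
    Measurable.ite (measurableSet_lt measurable_snd (hg.comp measurable_fst))
      measurable_const measurable_const
  exact (((hstep (hu.comp measurable_fst)).sub (hstep (hu.comp measurable_snd))).abs
    |>.ennreal_ofReal.mul (by fun_prop)).aemeasurable

lemma exists_ae_eq_const_of_gag1_eq_zero {u : E → ℝ} (hu : Measurable u) (h : gag1 n s u = 0) :
    ∃ c, u =ᵐ[volume] fun _ => c := by
  rw [gag1_eq_lintegral_prod hu, lintegral_eq_zero_iff (by fun_prop), Measure.volume_eq_prod]
    at h
  have hae : ∀ᵐ x, ∀ᵐ y, u y = u x := by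
    filter_upwards [Measure.ae_ae_of_ae_prod h] with x hx
    filter_upwards [hx] with y hy
    rcases mul_eq_zero.1 hy with hxy | hxy
    · exact (sub_eq_zero.1 (abs_nonpos_iff.1 (ENNReal.ofReal_eq_zero.1 hxy))).symm
    · have h0 := le_antisymm (inv_nonpos.1 (ENNReal.ofReal_eq_zero.1 hxy)) (by positivity)
      rw [dist_eq_zero.1 ((Real.rpow_eq_zero_iff_of_nonneg dist_nonneg).1 h0).1]
  obtain ⟨x, hx⟩ := hae.exists
  exact ⟨u x, hx⟩

end Gagliardo

lemma gag1_dim_zero (s : ℝ) (u : EuclideanSpace ℝ (Fin 0) → ℝ) : gag1 0 s u = 0 := by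
  simp [gag1, Subsingleton.elim _ (0 : EuclideanSpace ℝ (Fin 0))]

section Cheeger

variable {n : ℕ} {s : ℝ} {Ω : Set (EuclideanSpace ℝ (Fin n))} {f : EuclideanSpace ℝ (Fin n) → ℝ}

local notation "E" => EuclideanSpace ℝ (Fin n)

lemma cheeg_le_perS_div {A : Set E} (hAΩ : A ⊆ Ω) (hA : MeasurableSet A)
    (hfA : 0 < ∫ x in A, f x) :
    cheeg n s Ω f ≤ perS n s A / ENNReal.ofReal (∫ x in A, f x) :=
  sInf_le ⟨A, hAΩ, hA, hfA, rfl⟩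

lemma cheeg_mul_le_perS {A : Set E} (hAΩ : A ⊆ Ω) (hA : MeasurableSet A) :
    cheeg n s Ω f * ENNReal.ofReal (∫ x in A, f x) ≤ perS n s A := by
  rcases le_or_gt (∫ x in A, f x) 0 with hfA | hfA
  · simp [ENNReal.ofReal_eq_zero.2 hfA]
  · calc cheeg n s Ω f * ENNReal.ofReal (∫ x in A, f x)
        ≤ perS n s A / ENNReal.ofReal (∫ x in A, f x) * ENNReal.ofReal (∫ x in A, f x) := by
          gcongr; exact cheeg_le_perS_div hAΩ hA hfA
      _ = perS n s A :=
          ENNReal.div_mul_cancel (ENNReal.ofReal_pos.2 hfA).ne' ENNReal.ofReal_ne_top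

lemma lintegral_mul_eq_lintegral_integral_superlevel (hf0 : ∀ x ∈ Ω, 0 ≤ f x)
    (hf : IntegrableOn f Ω) {w : E → ℝ} (hw : Measurable w) (hw0 : ∀ x, 0 ≤ w x)
    (hwΩ : ∀ x ∉ Ω, w x = 0) :
    ∫⁻ x in Ω, ENNReal.ofReal (f x) * ENNReal.ofReal (w x)
      = ∫⁻ t in Ioi 0, ENNReal.ofReal (∫ x in {x | t < w x}, f x) := by
  set μ := (volume.restrict Ω).withDensity fun x => ENNReal.ofReal (f x)
  calc ∫⁻ x in Ω, ENNReal.ofReal (f x) * ENNReal.ofReal (w x)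
      = ∫⁻ x, ENNReal.ofReal (w x) ∂μ :=
        (lintegral_withDensity_eq_lintegral_mul₀' hf.aemeasurable.ennreal_ofReal
          hw.ennreal_ofReal.aemeasurable).symm
    _ = ∫⁻ t in Ioi 0, μ {x | t < w x} :=
        lintegral_eq_lintegral_meas_lt μ (ae_of_all _ hw0) hw.aemeasurable
    _ = ∫⁻ t in Ioi 0, ENNReal.ofReal (∫ x in {x | t < w x}, f x) := by
        refine setLIntegral_congr_fun measurableSet_Ioi fun t ht => ?_
        have hA : MeasurableSet {x | t < w x} := measurableSet_lt measurable_const hw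
        have hAΩ := setOf_lt_subset_of_eq_zero (le_of_lt ht) hwΩ
        rw [withDensity_apply _ hA, Measure.restrict_restrict hA, inter_eq_left.2 hAΩ,
          ofReal_integral_eq_lintegral_ofReal (hf.mono_set hAΩ)
            (ae_restrict_of_forall_mem hA fun x hx => hf0 x (hAΩ hx))]

theorem cheeg_mul_lintegral_le_half_gag1 (hf0 : ∀ x ∈ Ω, 0 ≤ f x) (hf : IntegrableOn f Ω)
    {v : E → ℝ} (hv : Measurable v) (hvΩ : ∀ x ∉ Ω, v x = 0) :
    cheeg n s Ω f * ∫⁻ x in Ω, ENNReal.ofReal (f x) * ENNReal.ofReal (v x)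
      ≤ 1 / 2 * gag1 n s v := by
  set w := fun x => max (v x) 0
  have hw : Measurable w := hv.max measurable_const
  have hw0 : ∀ x, 0 ≤ w x := fun x => le_max_right _ _
  have hwΩ : ∀ x ∉ Ω, w x = 0 := fun x hx => by simp [w, hvΩ x hx]
  calc cheeg n s Ω f * ∫⁻ x in Ω, ENNReal.ofReal (f x) * ENNReal.ofReal (v x)
      = cheeg n s Ω f * ∫⁻ t in Ioi 0, ENNReal.ofReal (∫ x in {x | t < w x}, f x) := by
        rw [← lintegral_mul_eq_lintegral_integral_superlevel hf0 hf hw hw0 hwΩ]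
        simp [w]
    _ ≤ ∫⁻ t in Ioi 0, cheeg n s Ω f * ENNReal.ofReal (∫ x in {x | t < w x}, f x) :=
        lintegral_const_mul_le _ _
    _ ≤ ∫⁻ t in Ioi 0, perS n s {x | t < w x} :=
        setLIntegral_mono' measurableSet_Ioi fun t ht =>
          cheeg_mul_le_perS (setOf_lt_subset_of_eq_zero (le_of_lt ht) hwΩ)
            (measurableSet_lt measurable_const hw)
    _ = 1 / 2 * gag1 n s w := by
        rw [gag1_eq_lintegral_gag1_superlevel hw hw0, ← lintegral_const_mul' _ _ (by simp)]
        rfl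
    _ ≤ 1 / 2 * gag1 n s v := by
        gcongr
        exact gag1_mono fun x y => abs_max_sub_max_le_abs (v x) (v y) 0

lemma integral_mul_le_toReal_lintegral (hΩ : MeasurableSet Ω) (hf0 : ∀ x ∈ Ω, 0 ≤ f x)
    {v : E → ℝ} (hfv : IntegrableOn (fun x => f x * v x) Ω) :
    ∫ x in Ω, f x * v x ≤ (∫⁻ x in Ω, ENNReal.ofReal (f x) * ENNReal.ofReal (v x)).toReal := by
  rw [integral_eq_lintegral_pos_part_sub_lintegral_neg_part hfv,
    setLIntegral_congr_fun hΩ fun x hx => ENNReal.ofReal_mul (hf0 x hx)]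
  exact sub_le_self _ ENNReal.toReal_nonneg

lemma toReal_sub_toReal_lintegral_le_F1 (hΩ : MeasurableSet Ω) (hf0 : ∀ x ∈ Ω, 0 ≤ f x)
    {v : E → ℝ} (hv : Adm n s Ω f v) :
    (1 / 2 * gag1 n s v).toReal
      - (∫⁻ x in Ω, ENNReal.ofReal (f x) * ENNReal.ofReal (v x)).toReal ≤ F1 n s Ω f v := by
  rw [F1, ENNReal.toReal_mul]
  gcongr
  · norm_num
  · exact integral_mul_le_toReal_lintegral hΩ hf0 hv.2.2.2

lemma F1_nonneg (hΩ : MeasurableSet Ω) (hf0 : ∀ x ∈ Ω, 0 ≤ f x) (hf : IntegrableOn f Ω)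
    (hcheeg : 1 ≤ cheeg n s Ω f) {v : E → ℝ} (hv : Adm n s Ω f v) :
    0 ≤ F1 n s Ω f v := by
  refine le_trans ?_ (toReal_sub_toReal_lintegral_le_F1 hΩ hf0 hv)
  refine sub_nonneg.2 (ENNReal.toReal_mono (by finiteness [hv.2.2.1]) ?_)
  exact (le_mul_of_one_le_left' hcheeg).trans
    (cheeg_mul_lintegral_le_half_gag1 hf0 hf hv.1 hv.2.1)

lemma F1_pos (hΩ : MeasurableSet Ω) (hf0 : ∀ x ∈ Ω, 0 ≤ f x) (hf : IntegrableOn f Ω)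
    (hcheeg : 1 < cheeg n s Ω f) {v : E → ℝ} (hv : Adm n s Ω f v) (hv0 : gag1 n s v ≠ 0) :
    0 < F1 n s Ω f v := by
  set I := ∫⁻ x in Ω, ENNReal.ofReal (f x) * ENNReal.ofReal (v x)
  have hIv : cheeg n s Ω f * I ≤ 1 / 2 * gag1 n s v :=
    cheeg_mul_lintegral_le_half_gag1 hf0 hf hv.1 hv.2.1
  have hv_top : 1 / 2 * gag1 n s v ≠ ⊤ := by finiteness [hv.2.2.1]
  have hI_top : I ≠ ⊤ :=
    ne_top_of_le_ne_top hv_top ((le_mul_of_one_le_left' hcheeg.le).trans hIv)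
  have hlt : I < 1 / 2 * gag1 n s v := by
    rcases eq_or_ne I 0 with hI | hI
    · simpa [hI, pos_iff_ne_zero] using hv0
    · calc I = 1 * I := (one_mul I).symm
        _ < cheeg n s Ω f * I := ENNReal.mul_lt_mul_left hI hI_top hcheeg
        _ ≤ 1 / 2 * gag1 n s v := hIv
  exact (sub_pos.2 ((ENNReal.toReal_lt_toReal hI_top hv_top).2 hlt)).trans_le
    (toReal_sub_toReal_lintegral_le_F1 hΩ hf0 hv)

end Cheeger

lemma ae_eq_zero_of_ae_eq_const {E : Type*} [NormedAddCommGroup E] [NormedSpace ℝ E]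
    [Nontrivial E] [FiniteDimensional ℝ E] [MeasurableSpace E] [BorelSpace E]
    (μ : Measure E) [μ.IsAddHaarMeasure] {Ω : Set E} (hΩ : Bornology.IsBounded Ω)
    {u : E → ℝ} (hu : ∀ x ∉ Ω, u x = 0) {c : ℝ} (hc : u =ᵐ[μ] fun _ => c) :
    u =ᵐ[μ] 0 := by
  rcases eq_or_ne c 0 with rfl | hc0
  · exact hc
  have hΩc : μ Ωᶜ = 0 := measure_mono_null (fun x hx => by simp [hu x hx, Ne.symm hc0]) hc
  have : μ univ < ⊤ := by
    rw [← union_compl_self Ω]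
    exact (measure_union_le _ _).trans_lt (by simpa [hΩc] using hΩ.measure_lt_top)
  simp at this

theorem stmt9_general (n : ℕ) (s σ : ℝ) (Ω : Set (EuclideanSpace ℝ (Fin n)))
    (f : EuclideanSpace ℝ (Fin n) → ℝ)
    (hΩo : IsOpen Ω) (hΩb : Bornology.IsBounded Ω)
    (hs1 : s < 1) (hσ0 : 0 < σ) (hσs : σ < s)
    (hf0 : ∀ x ∈ Ω, 0 ≤ f x)
    (hf : MemLp f (ENNReal.ofReal ((n : ℝ) / σ)) (volume.restrict Ω))
    (x₀ : EuclideanSpace ℝ (Fin n)) (r₀ : ℝ)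
    (hball : Metric.ball x₀ r₀ ⊆ Ω) (hfball : 0 < ∫ x in Metric.ball x₀ r₀, f x)
    (hcheeg : 1 < cheeg n s Ω f) :
    (Adm n s Ω f (fun _ => (0 : ℝ)) ∧
      ∀ v, Adm n s Ω f v → F1 n s Ω f (fun _ => (0 : ℝ)) ≤ F1 n s Ω f v) ∧
    ∀ u, Adm n s Ω f u → (∀ v, Adm n s Ω f v → F1 n s Ω f u ≤ F1 n s Ω f v) →
      u =ᵐ[volume] fun _ => (0 : ℝ) := by
  have hn : n ≠ 0 := by
    rintro rfl
    have h := cheeg_le_perS_div (s := s) hball measurableSet_ball hfball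
    simp [perS, gag1_dim_zero] at h
    simp [h] at hcheeg
  have hΩ := hΩo.measurableSet
  have hfi : IntegrableOn f Ω := by
    have : IsFiniteMeasure (volume.restrict Ω) :=
      isFiniteMeasure_restrict.2 hΩb.measure_lt_top.ne
    refine hf.integrable (ENNReal.one_le_ofReal.2 ((one_le_div hσ0).2 ?_))
    have : (1 : ℝ) ≤ n := Nat.one_le_cast.2 (Nat.one_le_iff_ne_zero.2 hn)
    linarith
  have hzero : Adm n s Ω f fun _ => 0 :=
    ⟨measurable_const, fun _ _ => rfl, by simp [gag1], by simp⟩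
  have hF0 : F1 n s Ω f (fun _ => 0) = 0 := by simp [F1, gag1]
  refine ⟨⟨hzero, fun v hv => hF0.trans_le (F1_nonneg hΩ hf0 hfi hcheeg.le hv)⟩,
    fun u hu hmin => ?_⟩
  have hgag : gag1 n s u = 0 := by
    by_contra h
    exact (F1_pos hΩ hf0 hfi hcheeg hu h).not_ge ((hmin _ hzero).trans_eq hF0)
  have : NeZero n := ⟨hn⟩
  obtain ⟨c, hc⟩ := exists_ae_eq_const_of_gag1_eq_zero hu.1 hgag
  exact ae_eq_zero_of_ae_eq_const volume hΩb hu.2.1 hc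

/-- If the weighted fractional Cheegar constant satisfies `h^f_s(Ω) > 1` (with `f ≥ 0`,
`f ∈ L^{n/σ}(Ω)` for some `σ ∈ (0,s)`, and `∫_B f > 0` on some ball `B ⊆ Ω`), then the
unique minimizer of `F(u) = (1/2)[u]_{W^{s,1}(ℝⁿ)} − ∫_Ω f u` over `W^{s,1}_0(Ω)` is
`u = 0`. -/
theorem stmt9 (n : ℕ) (s σ : ℝ) (Ω : Set (EuclideanSpace ℝ (Fin n)))
    (f : EuclideanSpace ℝ (Fin n) → ℝ)
    (hΩo : IsOpen Ω) (hΩb : Bornology.IsBounded Ω)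
    (hs0 : 0 < s) (hs1 : s < 1) (hσ0 : 0 < σ) (hσs : σ < s)
    (hf0 : ∀ x ∈ Ω, 0 ≤ f x)
    (hf : MemLp f (ENNReal.ofReal ((n : ℝ) / σ)) (volume.restrict Ω))
    (x₀ : EuclideanSpace ℝ (Fin n)) (r₀ : ℝ) (hr₀ : 0 < r₀)
    (hball : Metric.ball x₀ r₀ ⊆ Ω) (hfball : 0 < ∫ x in Metric.ball x₀ r₀, f x)
    (hcheeg : 1 < cheeg n s Ω f) :
    (Adm n s Ω f (fun _ => (0 : ℝ)) ∧
      ∀ v, Adm n s Ω f v → F1 n s Ω f (fun _ => (0 : ℝ)) ≤ F1 n s Ω f v) ∧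
    ∀ u, Adm n s Ω f u → (∀ v, Adm n s Ω f v → F1 n s Ω f u ≤ F1 n s Ω f v) →
      u =ᵐ[volume] fun _ => (0 : ℝ) :=
  stmt9_general n s σ Ω f hΩo hΩb hs1 hσ0 hσs hf0 hf x₀ r₀ hball hfball hcheeg
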